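/- Let S_r be the right unilateral shift on ℓ²(ℕ) (the isometry determined by S_r e_n = e_{n+1} on the standard orthonormal basis {e_n}_{n∈ℕ}), and let S_r* be its adjoint (the left shift). Then the family of powers {(S_r*)^n}_{n∈ℕ}, viewed as maps from the closed unit ball of ℓ²(ℕ) to itself, is NOT UEC for the weak uniformity. -/

import Mathlib

/-!
The basis vectors `e n` tend weakly to `0` (Bessel's inequality), so weak uniform
equicontinuity of the powers `T ^ n` of `T = S*` would force
`⟪T ^ n (e n) - T ^ n 0, e 0⟫ → 0`. But `T` lowers `e (n + 1)` to `e n`, so `T ^ n (e n) = e 0`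
and this inner product is constantly `1`.
-/

open scoped InnerProductSpace

def UECweak {H : Type*} [NormedAddCommGroup H] [InnerProductSpace ℂ H]
    {ι : Type*} (F : ι → H → H) : Prop :=
  ∀ ε : ℝ, 0 < ε → ∀ (N : ℕ) (x : Fin N → H), (∀ i, ‖x i‖ ≤ 1) →
    ∃ (δ : ℝ) (M : ℕ) (w : Fin M → H), 0 < δ ∧ (∀ j, ‖w j‖ ≤ 1) ∧
      ∀ ξ η : H, ‖ξ‖ ≤ 1 → ‖η‖ ≤ 1 →
        (∀ j, ‖⟪ξ - η, w j⟫_ℂ‖ < δ) →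
        ∀ (k : ι) (i : Fin N), ‖⟪F k ξ - F k η, x i⟫_ℂ‖ < ε

open Filter Topology
open scoped lp

theorem UECweak.tendsto_inner_sub {H : Type*} [NormedAddCommGroup H] [InnerProductSpace ℂ H]
    {ι : Type*} {F : ι → H → H} (hF : UECweak F) {α : Type*} {l : Filter α} {ξ η : α → H}
    (hξ : ∀ a, ‖ξ a‖ ≤ 1) (hη : ∀ a, ‖η a‖ ≤ 1)
    (hweak : ∀ w : H, Tendsto (fun a => ⟪ξ a - η a, w⟫_ℂ) l (𝓝 0))
    (k : α → ι) {x : H} (hx : ‖x‖ ≤ 1) :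
    Tendsto (fun a => ⟪F (k a) (ξ a) - F (k a) (η a), x⟫_ℂ) l (𝓝 0) := by
  refine Metric.tendsto_nhds.2 fun ε hε => ?_
  obtain ⟨δ, M, w, hδ, -, hclose⟩ := hF ε hε 1 (fun _ => x) (fun _ => hx)
  have hsmall : ∀ᶠ a in l, ∀ j, ‖⟪ξ a - η a, w j⟫_ℂ‖ < δ :=
    eventually_all.2 fun j => by
      simpa using (Metric.tendsto_nhds.1 (hweak (w j))) δ hδ
  filter_upwards [hsmall] with a ha
  simpa using hclose (ξ a) (η a) (hξ a) (hη a) ha (k a) 0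

section

variable {𝕜 E : Type*} [RCLike 𝕜] [NormedAddCommGroup E] [InnerProductSpace 𝕜 E]

theorem Orthonormal.tendsto_inner_atTop_zero {v : ℕ → E} (hv : Orthonormal 𝕜 v) (x : E) :
    Tendsto (fun n => ⟪v n, x⟫_𝕜) atTop (𝓝 0) := by
  rw [tendsto_zero_iff_norm_tendsto_zero]
  simpa using (hv.inner_products_summable (x := x)).tendsto_atTop_zero.sqrt

theorem ContinuousLinearMap.pow_apply_add_of_apply_succ {T : E →L[𝕜] E} {v : ℕ → E}
    (h : ∀ n, T (v (n + 1)) = v n) (n k : ℕ) : (T ^ k) (v (n + k)) = v n := by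
  induction k generalizing n with
  | zero => rfl
  | succ k ih =>
    rw [pow_succ]
    change (T ^ k) (T (v (n + k + 1))) = v n
    rw [h, ih]

end

section

variable {𝕜 : Type*} [RCLike 𝕜]

theorem lp.orthonormal_single {ι : Type*} [DecidableEq ι] :
    Orthonormal 𝕜 (fun i : ι => lp.single 2 i (1 : 𝕜)) := by
  refine orthonormal_iff_ite.2 fun i j => ?_
  rw [lp.inner_single_left, lp.single_apply]
  split_ifs with h <;> simp [h]

theorem lp.apply_eq_inner_single {ι : Type*} [DecidableEq ι] (f : ℓ²(ι, 𝕜)) (i : ι) :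
    f i = ⟪lp.single 2 i (1 : 𝕜), f⟫_𝕜 := by
  simp [lp.inner_single_left]

theorem adjoint_apply_single_succ {S : ℓ²(ℕ, 𝕜) →L[𝕜] ℓ²(ℕ, 𝕜)}
    (hS : ∀ n, S (lp.single 2 n 1) = lp.single 2 (n + 1) 1) (n : ℕ) :
    S.adjoint (lp.single 2 (n + 1) 1) = lp.single 2 n 1 := by
  ext m
  simp only [lp.apply_eq_inner_single _ m, ContinuousLinearMap.adjoint_inner_right, hS,
    orthonormal_iff_ite.1 lp.orthonormal_single, add_left_inj]

end

theorem not_uecWeak_leftShift_powers_general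
    (S : (lp (fun _ : ℕ => ℂ) 2) →L[ℂ] (lp (fun _ : ℕ => ℂ) 2))
    (hS : ∀ n : ℕ, S (lp.single 2 n 1) = lp.single 2 (n + 1) 1) :
    ¬ UECweak (fun n : ℕ => fun x : lp (fun _ : ℕ => ℂ) 2 =>
        ((ContinuousLinearMap.adjoint S) ^ n) x) := by
  intro hF
  have he : Orthonormal ℂ (fun n : ℕ => lp.single 2 n (1 : ℂ)) := lp.orthonormal_single
  have hlim := hF.tendsto_inner_sub (ξ := fun n => lp.single 2 n (1 : ℂ)) (η := 0)
    (fun n => (he.1 n).le) (by simp) (by simpa using he.tendsto_inner_atTop_zero) id (he.1 0).le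
  have hpow : ∀ n, (S.adjoint ^ n) (lp.single 2 n 1) = lp.single 2 0 1 := fun n => by
    simpa using ContinuousLinearMap.pow_apply_add_of_apply_succ
      (v := fun n => lp.single 2 n (1 : ℂ)) (adjoint_apply_single_succ hS) 0 n
  simp only [id, Pi.zero_apply, map_zero, sub_zero, hpow, inner_self_eq_norm_sq_to_K,
    he.1 0, RCLike.ofReal_one, one_pow] at hlim
  exact one_ne_zero (tendsto_nhds_unique tendsto_const_nhds hlim)

/-- Let `S_r` be the right unilateral shift on `ℓ²(ℕ)`, the isometry determined by
`S_r e_n = e_{n+1}` on the standard orthonormal basis, and let `S_r*` be its adjoint (the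
left shift).  Then the family of powers `{(S_r*)^n}_{n ∈ ℕ}`, viewed as maps of the closed
unit ball of `ℓ²(ℕ)` to itself, is not UEC for the weak uniformity. -/
theorem not_uecWeak_leftShift_powers
    (S : (lp (fun _ : ℕ => ℂ) 2) →L[ℂ] (lp (fun _ : ℕ => ℂ) 2))
    (hiso : ∀ x : lp (fun _ : ℕ => ℂ) 2, ‖S x‖ = ‖x‖)
    (hS : ∀ n : ℕ, S (lp.single 2 n 1) = lp.single 2 (n + 1) 1) :
    ¬ UECweak (fun n : ℕ => fun x : lp (fun _ : ℕ => ℂ) 2 =>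
        ((ContinuousLinearMap.adjoint S) ^ n) x) :=
  not_uecWeak_leftShift_powers_general S hS
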